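/- arXiv:2210.15082 — 2 statements merged into one kernel-verified Lean document; each statement's English description precedes it below -/
import Mathlib

section
/- Let n ≥ 1, let V be a nonempty finite subset of ℝⁿ, let x_c ∈ ℝⁿ and δ > 0. Suppose there exists v ∈ V with |v − x_c| ≤ 2δ/5, and let x_rand ∈ ℝⁿ satisfy |x_rand − x_c| ≤ δ/5. Then: (a) any z ∈ V with |z − x_c| > δ satisfies |z − x_rand| > 4δ/5, while |v − x_rand| ≤ 3δ/5; and (b) consequently, every w ∈ V attaining the minimum of |y − x_rand| over y ∈ V satisfies |w − x_c| ≤ 4δ/5 ≤ δ. -/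
/-!
A nearest neighbour `w` of `xrand` is at least as close to `xrand` as the near vertex `v`,
so two triangle inequalities through `xrand` give `|w - xc| ≤ |v - xc| + 2 |xrand - xc| ≤ 4δ/5`.
-/

section PseudoMetricSpace

variable {X : Type*} [PseudoMetricSpace X]

theorem dist_le_dist_add_two_mul_of_dist_le {w v r c : X} (h : dist w r ≤ dist v r) :
    dist w c ≤ dist v c + 2 * dist r c :=
  calc dist w c ≤ dist w r + dist r c := dist_triangle w r c
    _ ≤ dist v r + dist r c := by gcongr
    _ ≤ dist v c + dist r c + dist r c := by gcongr; exact dist_triangle_right v r c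
    _ = dist v c + 2 * dist r c := by ring

end PseudoMetricSpace

theorem nearest_neighbor_ball_general {n : ℕ}
    (V : Finset (EuclideanSpace ℝ (Fin n)))
    (xc xrand : EuclideanSpace ℝ (Fin n)) (δ : ℝ) (hδ : 0 < δ)
    (v : EuclideanSpace ℝ (Fin n)) (hv : v ∈ V) (hvc : ‖v - xc‖ ≤ 2 * δ / 5)
    (hrand : ‖xrand - xc‖ ≤ δ / 5) :
    ((∀ z ∈ V, δ < ‖z - xc‖ → 4 * δ / 5 < ‖z - xrand‖) ∧ ‖v - xrand‖ ≤ 3 * δ / 5) ∧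
    ∀ w ∈ V, (∀ y ∈ V, ‖w - xrand‖ ≤ ‖y - xrand‖) →
      ‖w - xc‖ ≤ 4 * δ / 5 ∧ 4 * δ / 5 ≤ δ := by
  simp only [← dist_eq_norm] at *
  refine ⟨⟨fun z _ hz => ?_, ?_⟩, fun w _ hmin => ⟨?_, by linarith⟩⟩
  · linarith [dist_triangle z xrand xc]
  · linarith [dist_triangle_right v xrand xc]
  · linarith [dist_le_dist_add_two_mul_of_dist_le (c := xc) (hmin v hv)]

/-- deterministic core of the nearest-neighbor lemma. -/
theorem nearest_neighbor_ball {n : ℕ} (hn : 1 ≤ n)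
    (V : Finset (EuclideanSpace ℝ (Fin n))) (hV : V.Nonempty)
    (xc xrand : EuclideanSpace ℝ (Fin n)) (δ : ℝ) (hδ : 0 < δ)
    (v : EuclideanSpace ℝ (Fin n)) (hv : v ∈ V) (hvc : ‖v - xc‖ ≤ 2 * δ / 5)
    (hrand : ‖xrand - xc‖ ≤ δ / 5) :
    ((∀ z ∈ V, δ < ‖z - xc‖ → 4 * δ / 5 < ‖z - xrand‖) ∧ ‖v - xrand‖ ≤ 3 * δ / 5) ∧
    ∀ w ∈ V, (∀ y ∈ V, ‖w - xrand‖ ≤ ‖y - xrand‖) →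
      ‖w - xc‖ ≤ 4 * δ / 5 ∧ 4 * δ / 5 ≤ δ :=
  nearest_neighbor_ball_general V xc xrand δ hδ v hv hvc hrand
end

section
/- Let E₁ ⊆ ℝ≥0 × ℕ be a compact hybrid time domain with maximal element (T,J) (that is, (T,J) ∈ E₁ and t ≤ T, j ≤ J for all (t,j) ∈ E₁), and let E₂ ⊆ ℝ≥0 × ℕ be a nonempty hybrid time domain. Then E₁ ∪ (E₂ + {(T,J)}) is a hybrid time domain, where E₂ + {(T,J)} = {(t + T, j + J) : (t,j) ∈ E₂} is the Minkowski translate. -/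
/-- A hybrid time domain. -/
def IsHybridTimeDomain (E : Set (ℝ × ℕ)) : Prop :=
  (∀ p ∈ E, 0 ≤ p.1) ∧
  ∀ p ∈ E, ∃ t : ℕ → ℝ, t 0 = 0 ∧ t (p.2 + 1) = p.1 ∧
    (∀ i, i ≤ p.2 → t i ≤ t (i + 1)) ∧
    E ∩ (Set.Icc 0 p.1 ×ˢ Set.Iic p.2) =
      ⋃ j ∈ Set.Iic p.2, Set.Icc (t j) (t (j + 1)) ×ˢ ({j} : Set ℕ)

/-- `(T, J)` is the maximal element of the hybrid time domain `E`. -/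
def IsMaxElem (E : Set (ℝ × ℕ)) (T : ℝ) (J : ℕ) : Prop :=
  (T, J) ∈ E ∧ ∀ p ∈ E, p.1 ≤ T ∧ p.2 ≤ J

/-!
Order `ℝ × ℕ` componentwise: the translate is the image of `E₂` under `· + (T, J)`, and the box
`[0, p.1] × {0, …, p.2}` is the order interval `Icc 0 p`. Every point of `E₁` lies in
`Icc 0 (T, J)` and every point of the translate above `(T, J)`. So the box of a point of `E₁` meets
the translate at most in `(T, J) ∈ E₁`, and the box of `q + (T, J)` cuts out `E₁` together with the
translate of the box of `q`. Jump times for `q + (T, J)` are those of `E₁` up to index `J`,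
followed by those of `E₂` at `q` delayed by `T`.
-/

open Set

section OrderedCancelAddCommMonoid

variable {M : Type*} [AddCommMonoid M] [PartialOrder M] [IsOrderedCancelAddMonoid M]
  {s₁ s₂ : Set M} {a b p : M}

theorem union_image_add_right_inter_Icc_of_le (h₁ : IsGreatest s₁ a) (h₂ : s₂ ⊆ Ici 0)
    (hp : p ≤ a) : (s₁ ∪ (· + a) '' s₂) ∩ Icc 0 p = s₁ ∩ Icc 0 p := by
  rw [union_inter_distrib_right, union_eq_left]
  rintro _ ⟨⟨x, hx, rfl⟩, hx0, hxp⟩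
  obtain rfl : x = 0 := le_antisymm (add_le_iff_nonpos_left.mp (hxp.trans hp)) (h₂ hx)
  exact ⟨by simpa using h₁.1, hx0, hxp⟩

theorem image_add_right_inter_Icc_add (h₂ : s₂ ⊆ Ici 0) (ha : 0 ≤ a) :
    (· + a) '' s₂ ∩ Icc 0 (b + a) = (· + a) '' (s₂ ∩ Icc 0 b) := by
  ext y
  constructor
  · rintro ⟨⟨x, hx, rfl⟩, -, hxb⟩
    exact ⟨x, ⟨hx, h₂ hx, le_of_add_le_add_right hxb⟩, rfl⟩
  · rintro ⟨x, ⟨hx, hx0, hxb⟩, rfl⟩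
    exact ⟨⟨x, hx, rfl⟩, add_nonneg hx0 ha, add_le_add_left hxb a⟩

theorem union_image_add_right_inter_Icc_add (h₁ : s₁ ⊆ Icc 0 a) (h₂ : s₂ ⊆ Ici 0)
    (ha : 0 ≤ a) (hb : 0 ≤ b) :
    (s₁ ∪ (· + a) '' s₂) ∩ Icc 0 (b + a) = s₁ ∩ Icc 0 a ∪ (· + a) '' (s₂ ∩ Icc 0 b) := by
  have h₁' : s₁ ⊆ Icc 0 (b + a) := h₁.trans (Icc_subset_Icc_right (le_add_of_nonneg_left hb))
  rw [union_inter_distrib_right, image_add_right_inter_Icc_add h₂ ha, inter_eq_left.mpr h₁,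
    inter_eq_left.mpr h₁']

end OrderedCancelAddCommMonoid

theorem Icc_prod_Iic_eq_Icc (p : ℝ × ℕ) : Icc 0 p.1 ×ˢ Iic p.2 = Icc 0 p := by
  rw [← Icc_bot (a := p.2), Icc_prod_Icc]
  rfl

theorem mem_iUnion_Icc_prod_singleton {t : ℕ → ℝ} {J : ℕ} {x : ℝ × ℕ} :
    x ∈ ⋃ j ∈ Iic J, Icc (t j) (t (j + 1)) ×ˢ ({j} : Set ℕ) ↔
      x.2 ≤ J ∧ x.1 ∈ Icc (t x.2) (t (x.2 + 1)) := by
  simp only [mem_iUnion, mem_prod, mem_singleton_iff, mem_Iic, exists_prop]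
  constructor
  · rintro ⟨j, hj, hx, rfl⟩
    exact ⟨hj, hx⟩
  · exact fun h => ⟨x.2, h.1, h.2, rfl⟩

theorem mem_image_add_right_iff {S : Set (ℝ × ℕ)} {a x : ℝ × ℕ} :
    x ∈ (· + a) '' S ↔ a.2 ≤ x.2 ∧ (x.1 - a.1, x.2 - a.2) ∈ S := by
  constructor
  · rintro ⟨y, hy, rfl⟩
    simpa using hy
  · rintro ⟨h, hx⟩
    refine ⟨_, hx, Prod.ext ?_ ?_⟩
    · simp
    · simp [Nat.sub_add_cancel h]

def concatJumpTimes (u s : ℕ → ℝ) (T : ℝ) (J i : ℕ) : ℝ :=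
  if i ≤ J then u i else s (i - J) + T

section concatJumpTimes

variable {u s : ℕ → ℝ} {T : ℝ} {J K : ℕ}

theorem concatJumpTimes_of_le {i : ℕ} (h : i ≤ J) : concatJumpTimes u s T J i = u i :=
  if_pos h

theorem concatJumpTimes_add_add_one (k : ℕ) :
    concatJumpTimes u s T J (k + J + 1) = s (k + 1) + T := by
  simp [concatJumpTimes, Nat.add_right_comm k J 1]

theorem concatJumpTimes_succ : concatJumpTimes u s T J (J + 1) = s 1 + T := by
  simp [concatJumpTimes]

theorem concatJumpTimes_mono (hu : ∀ i ≤ J, u i ≤ u (i + 1)) (huT : u (J + 1) = T)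
    (hs₀ : s 0 = 0) (hs : ∀ i ≤ K, s i ≤ s (i + 1)) :
    ∀ i ≤ K + J, concatJumpTimes u s T J i ≤ concatJumpTimes u s T J (i + 1) := by
  intro i hi
  rcases lt_trichotomy i J with hiJ | rfl | hJi
  · rw [concatJumpTimes_of_le hiJ.le, concatJumpTimes_of_le hiJ]
    exact hu i hiJ.le
  · rw [concatJumpTimes_of_le le_rfl, concatJumpTimes_succ]
    linarith [hu i le_rfl, hs 0 (Nat.zero_le K)]
  · obtain ⟨k, rfl⟩ : ∃ k, i = k + J + 1 := ⟨i - J - 1, by omega⟩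
    rw [concatJumpTimes_add_add_one, show k + J + 1 + 1 = (k + 1) + J + 1 by omega,
      concatJumpTimes_add_add_one]
    linarith [hs (k + 1) (by omega)]

/-- The `J`-th interval of the concatenation is `[u J, T] ∪ [T, s 1 + T]`: the last interval of
the first domain and the first one of the delayed second domain merge. -/
theorem iUnion_concatJumpTimes (huJ : u J ≤ T) (huT : u (J + 1) = T) (hs₀ : s 0 = 0)
    (hs₁ : 0 ≤ s 1) :
    ⋃ j ∈ Iic (K + J), Icc (concatJumpTimes u s T J j) (concatJumpTimes u s T J (j + 1)) ×ˢ
        ({j} : Set ℕ) =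
      (⋃ j ∈ Iic J, Icc (u j) (u (j + 1)) ×ˢ ({j} : Set ℕ)) ∪
        (· + (T, J)) '' ⋃ j ∈ Iic K, Icc (s j) (s (j + 1)) ×ˢ ({j} : Set ℕ) := by
  ext ⟨r, j⟩
  simp only [mem_union, mem_iUnion_Icc_prod_singleton, mem_image_add_right_iff]
  rcases lt_trichotomy j J with hjJ | rfl | hJj
  · rw [concatJumpTimes_of_le hjJ.le, concatJumpTimes_of_le hjJ]
    simp only [show j ≤ K + J by omega, hjJ.le, not_le.mpr hjJ, true_and, false_and, or_false,
      Nat.succ_eq_add_one]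
  · rw [concatJumpTimes_of_le le_rfl, concatJumpTimes_succ]
    simp only [le_refl, Nat.sub_self, zero_add, le_add_iff_nonneg_left, zero_le, true_and, hs₀,
      sub_mem_Icc_iff_left, huT]
    rw [← mem_union, Icc_union_Icc_eq_Icc huJ (le_add_of_nonneg_left hs₁)]
  · obtain ⟨k, rfl⟩ : ∃ k, j = k + J + 1 := ⟨j - J - 1, by omega⟩
    rw [concatJumpTimes_add_add_one, show k + J + 1 + 1 = (k + 1) + J + 1 by omega,
      concatJumpTimes_add_add_one]
    simp only [show k + J + 1 - J = k + 1 by omega, sub_mem_Icc_iff_left,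
      show ¬ k + J + 1 ≤ J by omega, show J ≤ k + J + 1 by omega, false_and, false_or, true_and]
    rw [show k + J + 1 ≤ K + J ↔ k + 1 ≤ K by omega]

end concatJumpTimes

theorem union_translate_isHybridTimeDomain_general (E₁ E₂ : Set (ℝ × ℕ))
    (hE₁ : IsHybridTimeDomain E₁)
    (T : ℝ) (J : ℕ) (hmax : IsMaxElem E₁ T J)
    (hE₂ : IsHybridTimeDomain E₂) :
    IsHybridTimeDomain (E₁ ∪ ((fun p : ℝ × ℕ => (p.1 + T, p.2 + J)) '' E₂)) := by
  change IsHybridTimeDomain (E₁ ∪ (· + (T, J)) '' E₂)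
  obtain ⟨hE₁_nonneg, hE₁⟩ := hE₁
  obtain ⟨hE₂_nonneg, hE₂⟩ := hE₂
  simp only [Icc_prod_Iic_eq_Icc] at hE₁ hE₂
  have hmax' : IsGreatest E₁ (T, J) := ⟨hmax.1, fun p hp => hmax.2 p hp⟩
  have hTJ : (0 : ℝ × ℕ) ≤ (T, J) := ⟨hE₁_nonneg _ hmax.1, J.zero_le⟩
  have hE₁_Icc : E₁ ⊆ Icc 0 (T, J) := fun p hp => ⟨⟨hE₁_nonneg p hp, p.2.zero_le⟩, hmax'.2 hp⟩
  have hE₂_Ici : E₂ ⊆ Ici 0 := fun q hq => ⟨hE₂_nonneg q hq, q.2.zero_le⟩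
  refine ⟨?_, ?_⟩
  · rintro _ (hp | ⟨q, hq, rfl⟩)
    · exact hE₁_nonneg _ hp
    · exact add_nonneg (hE₂_nonneg q hq) hTJ.1
  rintro _ (hp | ⟨q, hq, rfl⟩) <;> simp only [Icc_prod_Iic_eq_Icc]
  · rw [union_image_add_right_inter_Icc_of_le hmax' hE₂_Ici (hmax'.2 hp)]
    exact hE₁ _ hp
  · obtain ⟨u, hu₀, huT, hu, hEu⟩ := hE₁ _ hmax.1
    obtain ⟨s, hs₀, hsq, hs, hEs⟩ := hE₂ q hq
    refine ⟨concatJumpTimes u s T J, ?_, ?_, concatJumpTimes_mono hu huT hs₀ hs, ?_⟩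
    · exact (concatJumpTimes_of_le J.zero_le).trans hu₀
    · exact (concatJumpTimes_add_add_one q.2).trans (congrArg (· + T) hsq)
    · rw [union_image_add_right_inter_Icc_add hE₁_Icc hE₂_Ici hTJ (hE₂_Ici hq), hEu, hEs]
      exact (iUnion_concatJumpTimes (huT ▸ hu J le_rfl) huT hs₀ (hs₀ ▸ hs 0 q.2.zero_le)).symm

/-- the union of a compact hybrid time domain with maximal element
`(T, J)` and the Minkowski translate by `(T, J)` of a nonempty hybrid time domain
is again a hybrid time domain. -/
theorem union_translate_isHybridTimeDomain (E₁ E₂ : Set (ℝ × ℕ))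
    (hE₁ : IsHybridTimeDomain E₁) (hc : IsCompact E₁)
    (T : ℝ) (J : ℕ) (hmax : IsMaxElem E₁ T J)
    (hE₂ : IsHybridTimeDomain E₂) (hne : E₂.Nonempty) :
    IsHybridTimeDomain (E₁ ∪ ((fun p : ℝ × ℕ => (p.1 + T, p.2 + J)) '' E₂)) :=
  union_translate_isHybridTimeDomain_general E₁ E₂ hE₁ T J hmax hE₂
end
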